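/- arXiv:1811.11235 — 2 statements merged into one kernel-verified Lean document; each statement's English description precedes it below -/
import Mathlib

section
/- Let d ≥ 2 and k ≥ 2 with k = ds + b, 0 ≤ b ≤ d−1, and let ℓ_1, ..., ℓ_d be nonnegative integers summing to k with each ℓ_i ∈ {s, s+1}. Then for all nonnegative reals x_1, ..., x_d: (∑_{i=1}^d x_i)^k − ∑_{i=1}^d x_i^k ≥ ((d^k − d)/d!) · ∑_{π ∈ S_d} ∏_{j=1}^d x_j^{ℓ_{π(j)}}. -/
/-!
Expanding `(∑ xᵢ)^k` over words `f : Fin k → Fin d` gives one monomial `∏ᵢ xᵢ^(mᵢ)` per word,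
where `mᵢ` counts the letters equal to `i`; the `d` constant words give `∑ xᵢ^k`. Averaging over
relabellings of the letters replaces each remaining monomial by the symmetric sum
`∑_σ ∏ᵢ x_{σ i}^(mᵢ)`, and by Muirhead's inequality each of these dominates the one with the
balanced exponent vector `ℓ`, which is majorized by every exponent vector of the same sum.
Muirhead's inequality itself follows from Robin Hood transfers: moving one unit from an exponent to
one at least two smaller does not increase the symmetric sum and strictly decreases `∑ mᵢ²`, so
repeated transfers end at a balanced vector, which is a rearrangement of `ℓ`.
-/

open Finset

section Balanced

variable {ι : Type*} [Fintype ι] {s : ℕ} {m ℓ : ι → ℕ}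

theorem eq_or_eq_succ_of_forall_le_add_one (hm : ∀ i j, m i ≤ m j + 1)
    (hℓ : ∀ i, ℓ i = s ∨ ℓ i = s + 1) (hsum : ∑ i, m i = ∑ i, ℓ i) (j : ι) :
    m j = s ∨ m j = s + 1 := by
  have hlow : s ≤ m j := by
    by_contra! h
    have : ∑ i, m i < ∑ i, ℓ i :=
      calc ∑ i, m i < ∑ _i : ι, s :=
            sum_lt_sum (fun i _ => by have := hm i j; omega) ⟨j, mem_univ j, h⟩
        _ ≤ ∑ i, ℓ i := sum_le_sum fun i _ => by rcases hℓ i with h | h <;> omega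
    omega
  have hhigh : m j ≤ s + 1 := by
    by_contra! h
    have : ∑ i, ℓ i < ∑ i, m i :=
      calc ∑ i, ℓ i ≤ ∑ _i : ι, (s + 1) := sum_le_sum fun i _ => by rcases hℓ i with h | h <;> omega
        _ < ∑ i, m i := sum_lt_sum (fun i _ => by have := hm j i; omega) ⟨j, mem_univ j, h⟩
    omega
  omega

theorem exists_perm_eq_comp_of_forall_eq_or_eq_succ (hm : ∀ i, m i = s ∨ m i = s + 1)
    (hℓ : ∀ i, ℓ i = s ∨ ℓ i = s + 1) (hsum : ∑ i, m i = ∑ i, ℓ i) :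
    ∃ σ : Equiv.Perm ι, m = ℓ ∘ σ := by
  have hcount (g : ι → ℕ) (hg : ∀ i, g i = s ∨ g i = s + 1) :
      ∑ i, g i = Fintype.card ι * s + Fintype.card {i // g i = s + 1} ∧
        Fintype.card {i // g i = s} + Fintype.card {i // g i = s + 1} = Fintype.card ι := by
    have hg' (i : ι) : g i = s + if g i = s + 1 then 1 else 0 := by
      rcases hg i with h | h <;> simp [h]
    refine ⟨?_, ?_⟩
    · rw [sum_congr rfl fun i _ => hg' i, sum_add_distrib, sum_boole, ← Fintype.card_subtype]
      simp [mul_comm]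
    · have hs (i : ι) : g i = s ↔ ¬ g i = s + 1 := by rcases hg i with h | h <;> omega
      rw [Fintype.card_congr (Equiv.subtypeEquivRight hs), Fintype.card_subtype_compl]
      have := Fintype.card_subtype_le fun i => g i = s + 1
      omega
  have hfiber (c : ℕ) : Fintype.card {i // m i = c} = Fintype.card {i // ℓ i = c} := by
    obtain ⟨hm₁, hm₂⟩ := hcount m hm
    obtain ⟨hℓ₁, hℓ₂⟩ := hcount ℓ hℓ
    by_cases hc : c = s ∨ c = s + 1
    · rcases hc with rfl | rfl <;> omega
    · have hempty (g : ι → ℕ) (hg : ∀ i, g i = s ∨ g i = s + 1) :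
          Fintype.card {i // g i = c} = 0 :=
        Fintype.card_eq_zero_iff.2 ⟨fun i => hc (i.2 ▸ hg i)⟩
      rw [hempty m hm, hempty ℓ hℓ]
  exact ⟨Equiv.ofFiberEquiv fun c => Fintype.equivOfCardEq (hfiber c),
    funext fun i => (Equiv.ofFiberEquiv_map _ i).symm⟩

end Balanced

@[to_additive]
theorem prod_eq_mul_mul_prod_compl_pair {ι M : Type*} [Fintype ι] [DecidableEq ι] [CommMonoid M]
    (f : ι → M) {a b : ι} (hab : a ≠ b) : ∏ i, f i = f a * f b * ∏ i ∈ {a, b}ᶜ, f i := by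
  rw [← prod_mul_prod_compl {a, b}, prod_pair hab]

section TwoVariables

variable {R : Type*} [CommRing R] [LinearOrder R] [IsStrictOrderedRing R] {X Y : R}

theorem sub_mul_pow_sub_pow_nonneg (hX : 0 ≤ X) (hY : 0 ≤ Y) (n : ℕ) :
    0 ≤ (X - Y) * (X ^ n - Y ^ n) := by
  rcases le_total X Y with h | h
  · exact mul_nonneg_of_nonpos_of_nonpos (sub_nonpos.2 h) (sub_nonpos.2 (pow_le_pow_left₀ hX h n))
  · exact mul_nonneg (sub_nonneg.2 h) (sub_nonneg.2 (pow_le_pow_left₀ hY h n))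

theorem pow_mul_pow_add_pow_mul_pow_le (hX : 0 ≤ X) (hY : 0 ≤ Y) {p q : ℕ} (hpq : p ≤ q) :
    X ^ q * Y ^ (p + 1) + X ^ (p + 1) * Y ^ q ≤ X ^ (q + 1) * Y ^ p + X ^ p * Y ^ (q + 1) := by
  obtain ⟨n, rfl⟩ := Nat.exists_eq_add_of_le hpq
  have hdiff : X ^ (p + n + 1) * Y ^ p + X ^ p * Y ^ (p + n + 1)
      - (X ^ (p + n) * Y ^ (p + 1) + X ^ (p + 1) * Y ^ (p + n))
      = X ^ p * Y ^ p * ((X - Y) * (X ^ n - Y ^ n)) := by ring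
  have := mul_nonneg (mul_nonneg (pow_nonneg hX p) (pow_nonneg hY p))
    (sub_mul_pow_sub_pow_nonneg hX hY n)
  linarith

end TwoVariables

section SymmMonomial

variable {ι R : Type*} [Fintype ι] [DecidableEq ι]

def symmMonomial [CommSemiring R] (x : ι → R) (m : ι → ℕ) : R :=
  ∑ σ : Equiv.Perm ι, ∏ i, x (σ i) ^ m i

section CommSemiring

variable [CommSemiring R] (x : ι → R)

theorem symmMonomial_comp_perm (m : ι → ℕ) (τ : Equiv.Perm ι) :
    symmMonomial x (m ∘ τ) = symmMonomial x m := by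
  refine Fintype.sum_equiv (Equiv.mulRight τ⁻¹) _ _ fun σ => ?_
  rw [← Equiv.prod_comp τ (fun i => x (Equiv.mulRight τ⁻¹ σ i) ^ m i)]
  simp

theorem symmMonomial_eq_sum_perm_prod (m : ι → ℕ) :
    symmMonomial x m = ∑ π : Equiv.Perm ι, ∏ j, x j ^ m (π j) := by
  refine Fintype.sum_equiv (Equiv.inv _) _ _ fun σ => ?_
  simp only [Equiv.inv_apply]
  rw [← Equiv.prod_comp σ (fun j => x j ^ m (σ⁻¹ j))]
  simp

end CommSemiring

variable [CommRing R] [LinearOrder R] [IsStrictOrderedRing R] {x : ι → R}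

-- Pairing `σ` with `σ * swap a b` reduces the comparison to the two variables `x (σ a)`, `x (σ b)`.
theorem symmMonomial_le_of_eq_off_pair (hx : ∀ i, 0 ≤ x i) {m m' : ι → ℕ} {a b : ι}
    (hab : a ≠ b) (hoff : ∀ i ∈ ({a, b} : Finset ι)ᶜ, m' i = m i)
    (hpair : ∀ X Y : R, 0 ≤ X → 0 ≤ Y →
      X ^ m' a * Y ^ m' b + X ^ m' b * Y ^ m' a ≤ X ^ m a * Y ^ m b + X ^ m b * Y ^ m a) :
    symmMonomial x m' ≤ symmMonomial x m := by
  set T : (ι → ℕ) → Equiv.Perm ι → R := fun g σ => ∏ i, x (σ i) ^ g i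
  have hswap (g : ι → ℕ) : symmMonomial x g = ∑ σ, T g (σ * Equiv.swap a b) :=
    (Fintype.sum_equiv (Equiv.mulRight (Equiv.swap a b)) _ _ fun _ => rfl).symm
  have hfactor (g : ι → ℕ) (σ : Equiv.Perm ι) : T g σ + T g (σ * Equiv.swap a b) =
      (x (σ a) ^ g a * x (σ b) ^ g b + x (σ a) ^ g b * x (σ b) ^ g a) *
        ∏ i ∈ {a, b}ᶜ, x (σ i) ^ g i := by
    have hfix : ∀ i ∈ ({a, b} : Finset ι)ᶜ, Equiv.swap a b i = i := fun i hi => by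
      simp only [mem_compl, mem_insert, mem_singleton, not_or] at hi
      exact Equiv.swap_apply_of_ne_of_ne hi.1 hi.2
    have hrest : ∏ i ∈ {a, b}ᶜ, x (σ (Equiv.swap a b i)) ^ g i = ∏ i ∈ {a, b}ᶜ, x (σ i) ^ g i :=
      prod_congr rfl fun i hi => by rw [hfix i hi]
    simp only [T, prod_eq_mul_mul_prod_compl_pair _ hab, Equiv.Perm.mul_apply,
      Equiv.swap_apply_left, Equiv.swap_apply_right, hrest]
    ring
  have hterm (σ : Equiv.Perm ι) :
      T m' σ + T m' (σ * Equiv.swap a b) ≤ T m σ + T m (σ * Equiv.swap a b) := by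
    rw [hfactor, hfactor, prod_congr rfl fun i hi => by rw [hoff i hi]]
    exact mul_le_mul_of_nonneg_right (hpair _ _ (hx _) (hx _))
      (prod_nonneg fun i _ => pow_nonneg (hx _) _)
  have hsum := sum_le_sum fun σ (_ : σ ∈ univ) => hterm σ
  rw [sum_add_distrib, sum_add_distrib, ← hswap, ← hswap] at hsum
  change symmMonomial x m' + symmMonomial x m' ≤ symmMonomial x m + symmMonomial x m at hsum
  linarith

theorem exists_symmMonomial_le_of_add_two_le (hx : ∀ i, 0 ≤ x i) {m : ι → ℕ} {a b : ι}
    (hba : m b + 2 ≤ m a) :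
    ∃ m' : ι → ℕ, ∑ i, m' i = ∑ i, m i ∧ ∑ i, m' i ^ 2 < ∑ i, m i ^ 2 ∧
      symmMonomial x m' ≤ symmMonomial x m := by
  have hab : a ≠ b := by rintro rfl; omega
  obtain ⟨q, hq⟩ : ∃ q, m a = q + 1 := ⟨m a - 1, by omega⟩
  set m' := Function.update (Function.update m a q) b (m b + 1)
  have hm'a : m' a = q := by simp [m', hab]
  have hm'b : m' b = m b + 1 := by simp [m']
  have hoff : ∀ i ∈ ({a, b} : Finset ι)ᶜ, m' i = m i := fun i hi => by
    simp only [mem_compl, mem_insert, mem_singleton, not_or] at hi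
    simp [m', hi.1, hi.2]
  have hsum (g : ℕ → ℕ) :
      ∑ i, g (m' i) + (g (m a) + g (m b)) = ∑ i, g (m i) + (g (m' a) + g (m' b)) := by
    rw [sum_eq_add_add_sum_compl_pair (fun i => g (m' i)) hab,
      sum_eq_add_add_sum_compl_pair (fun i => g (m i)) hab,
      sum_congr rfl fun i hi => by rw [hoff i hi]]
    ring
  refine ⟨m', ?_, ?_, symmMonomial_le_of_eq_off_pair hx hab hoff fun X Y hX hY => ?_⟩
  · have := hsum id
    simp only [id, hm'a, hm'b] at this
    omega
  · have := hsum (· ^ 2)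
    simp only [hm'a, hm'b, hq] at this
    nlinarith
  · rw [hm'a, hm'b, hq]
    linarith [pow_mul_pow_add_pow_mul_pow_le hX hY (show m b ≤ q by omega)]

theorem symmMonomial_le_of_sum_eq (hx : ∀ i, 0 ≤ x i) {s : ℕ} {ℓ : ι → ℕ}
    (hℓ : ∀ i, ℓ i = s ∨ ℓ i = s + 1) (m : ι → ℕ) (hsum : ∑ i, m i = ∑ i, ℓ i) :
    symmMonomial x ℓ ≤ symmMonomial x m := by
  induction hN : ∑ i, m i ^ 2 using Nat.strong_induction_on generalizing m with
  | _ N ih =>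
  by_cases hgap : ∃ a b, m b + 2 ≤ m a
  · obtain ⟨a, b, hba⟩ := hgap
    obtain ⟨m', hsum', hlt, hle⟩ := exists_symmMonomial_le_of_add_two_le hx hba
    exact (ih _ (hN ▸ hlt) m' (hsum'.trans hsum) rfl).trans hle
  · push Not at hgap
    have hm := eq_or_eq_succ_of_forall_le_add_one (fun i j => Nat.le_of_lt_succ (hgap i j)) hℓ hsum
    obtain ⟨σ, rfl⟩ := exists_perm_eq_comp_of_forall_eq_or_eq_succ hm hℓ hsum
    exact (symmMonomial_comp_perm x ℓ σ).ge

end SymmMonomial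

section Expansion

variable {κ ι R : Type*} [Fintype κ] [Fintype ι] [DecidableEq ι] [CommRing R]

def fiberCard (f : κ → ι) (i : ι) : ℕ := Fintype.card {t // f t = i}

theorem prod_comp_eq_prod_pow_fiberCard (x : ι → R) (f : κ → ι) :
    ∏ t, x (f t) = ∏ i, x i ^ fiberCard f i := by
  rw [← Fintype.prod_fiberwise' f x]
  simp [fiberCard]

theorem sum_fiberCard (f : κ → ι) : ∑ i, fiberCard f i = Fintype.card κ := by
  simp only [fiberCard]
  rw [← Fintype.card_sigma, Fintype.card_congr (Equiv.sigmaFiberEquiv f)]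

theorem card_perm_smul_sum_prod_eq_sum_symmMonomial (x : ι → R) (T : Finset (κ → ι))
    (hT : ∀ (σ : Equiv.Perm ι) (f : κ → ι), σ ∘ f ∈ T ↔ f ∈ T) :
    Fintype.card (Equiv.Perm ι) • ∑ f ∈ T, ∏ t, x (f t) =
      ∑ f ∈ T, symmMonomial x (fiberCard f) := by
  have hinv (σ : Equiv.Perm ι) : ∑ f ∈ T, ∏ t, x (σ (f t)) = ∑ f ∈ T, ∏ t, x (f t) :=
    sum_equiv (Equiv.piCongrRight fun _ => σ) (fun f => (hT σ f).symm) fun _ _ => rfl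
  simp_rw [symmMonomial, ← prod_comp_eq_prod_pow_fiberCard]
  rw [sum_comm]
  simp [hinv]

theorem card_perm_smul_sum_pow_sub_sum_pow (x : ι → R) {k : ℕ} (hk : k ≠ 0) :
    Fintype.card (Equiv.Perm ι) • ((∑ i, x i) ^ k - ∑ i, x i ^ k) =
      ∑ f ∈ (univ.image (Function.const (Fin k)))ᶜ, symmMonomial x (fiberCard f) := by
  have : NeZero k := ⟨hk⟩
  have hconst : ∑ f ∈ univ.image (Function.const (Fin k)), ∏ t, x (f t) = ∑ i, x i ^ k := by
    rw [sum_image fun i _ j _ h => Function.const_injective h]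
    simp
  rw [← card_perm_smul_sum_prod_eq_sum_symmMonomial, Fintype.sum_pow, ← hconst,
    ← sum_add_sum_compl (univ.image (Function.const (Fin k))), add_sub_cancel_left]
  intro σ f
  simp only [mem_compl, mem_image, mem_univ, true_and, funext_iff, Function.const_apply]
  rw [← σ.exists_congr_right]
  simp

end Expansion

theorem stmt_5_general (d k s : ℕ) (hk : 2 ≤ k)
    (ℓ : Fin d → ℕ) (hℓsum : ∑ i, ℓ i = k)
    (hℓ : ∀ i, ℓ i = s ∨ ℓ i = s + 1)
    (x : Fin d → ℝ) (hx : ∀ i, 0 ≤ x i) :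
    (∑ i, x i) ^ k - ∑ i, x i ^ k ≥
      (((d : ℝ) ^ k - d) / (Nat.factorial d : ℝ))
        * ∑ π : Equiv.Perm (Fin d), ∏ j, x j ^ ℓ (π j) := by
  have hk₀ : k ≠ 0 := by omega
  have : NeZero k := ⟨hk₀⟩
  set N : Finset (Fin k → Fin d) := (univ.image (Function.const (Fin k)))ᶜ
  have hN : (#N : ℝ) = (d : ℝ) ^ k - d := by
    rw [card_compl, card_image_of_injective _ Function.const_injective, card_univ,
      Fintype.card_fun, Fintype.card_fin, Fintype.card_fin, Nat.cast_sub (Nat.le_self_pow hk₀ d),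
      Nat.cast_pow]
  have hmuirhead (f : Fin k → Fin d) (_ : f ∈ N) :
      symmMonomial x ℓ ≤ symmMonomial x (fiberCard f) :=
    symmMonomial_le_of_sum_eq hx hℓ _ (by rw [sum_fiberCard, hℓsum, Fintype.card_fin])
  have key := card_nsmul_le_sum N _ _ hmuirhead
  rw [← card_perm_smul_sum_pow_sub_sum_pow x hk₀, nsmul_eq_mul, nsmul_eq_mul, hN,
    Fintype.card_perm, Fintype.card_fin] at key
  rw [ge_iff_le, ← symmMonomial_eq_sum_perm_prod, div_mul_eq_mul_div,
    div_le_iff₀ (by positivity)]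
  linarith

theorem stmt_5 (d k s b : ℕ) (hd : 2 ≤ d) (hk : 2 ≤ k) (hb : b ≤ d - 1)
    (hks : k = d * s + b) (ℓ : Fin d → ℕ) (hℓsum : ∑ i, ℓ i = k)
    (hℓ : ∀ i, ℓ i = s ∨ ℓ i = s + 1)
    (x : Fin d → ℝ) (hx : ∀ i, 0 ≤ x i) :
    (∑ i, x i) ^ k - ∑ i, x i ^ k ≥
      (((d : ℝ) ^ k - d) / (Nat.factorial d : ℝ))
        * ∑ π : Equiv.Perm (Fin d), ∏ j, x j ^ ℓ (π j) :=
  stmt_5_general d k s hk ℓ hℓsum hℓ x hx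
end

section
/- Let d ≥ 2 and k ≥ 2 with k = ds + b, 0 ≤ b ≤ d−1, and let ℓ_1, ..., ℓ_d be nonnegative integers summing to k with each ℓ_i ∈ {s, s+1}. Then for all nonnegative reals x_1, ..., x_d with ∑ x_i = 1 and ∑ x_i^k < 1: (1/(1 − ∑_{i=1}^d x_i^k)) · (1/d!) · ∑_{π ∈ S_d} ∏_{j=1}^d x_j^{ℓ_{π(j)}} ≤ 1/(d^k − d), with equality when x_1 = ··· = x_d = 1/d. -/
/-!
Expanding `1 = (∑ xᵢ) ^ k` and averaging over `Perm (Fin d)` writes `d!` as a sum, over the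
`d ^ k` words `f : Fin k → Fin d`, of the symmetrized monomials whose exponent vector counts the
letters of `f`. The `d` constant words contribute `d! ∑ xᵢ ^ k`. Each of the other `d ^ k - d`
words contributes at least the symmetrized monomial of the balanced vector `ℓ`: moving one unit
of exponent from a larger entry to a smaller one never increases a symmetrized monomial in
nonnegative variables (the elementary step of Muirhead's inequality), and such moves lead from
any exponent vector with sum `k` to `ℓ`. Hence `(d ^ k - d) ∑_π ∏ⱼ x_{π j} ^ ℓⱼ ≤ d! (1 - ∑ xᵢ ^ k)`,
with equality at the uniform point, where all monomials coincide.
-/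

open Finset

theorem pow_mul_pow_add_pow_mul_pow_le_s6 {R : Type*} [CommRing R] [LinearOrder R]
    [IsStrictOrderedRing R] {y z : R} (hy : 0 ≤ y) (hz : 0 ≤ z) {a e : ℕ} (hea : e ≤ a) :
    y ^ a * z ^ (e + 1) + y ^ (e + 1) * z ^ a ≤ y ^ (a + 1) * z ^ e + y ^ e * z ^ (a + 1) := by
  obtain ⟨m, rfl⟩ := Nat.exists_eq_add_of_le hea
  have hmono : 0 ≤ (y ^ m - z ^ m) * (y - z) := by
    rcases le_total z y with hzy | hyz
    · exact mul_nonneg (sub_nonneg.2 (pow_le_pow_left₀ hz hzy m)) (sub_nonneg.2 hzy)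
    · exact mul_nonneg_of_nonpos_of_nonpos (sub_nonpos.2 (pow_le_pow_left₀ hy hyz m))
        (sub_nonpos.2 hyz)
  rw [← sub_nonneg]
  convert mul_nonneg (mul_nonneg (pow_nonneg hy e) (pow_nonneg hz e)) hmono using 1
  ring

variable {ι : Type*} [Fintype ι] [DecidableEq ι]

theorem prod_pow_add_prod_swap_pow_le {R : Type*} [CommRing R] [LinearOrder R]
    [IsStrictOrderedRing R] {w : ι → R} (hw : ∀ i, 0 ≤ w i) (c : ι → ℕ) {u v : ι}
    (huv : u ≠ v) (h : c v ≤ c u) :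
    ∏ j, w j ^ (c + Pi.single v 1 : ι → ℕ) j
        + ∏ j, w (Equiv.swap u v j) ^ (c + Pi.single v 1 : ι → ℕ) j
      ≤ ∏ j, w j ^ (c + Pi.single u 1 : ι → ℕ) j
        + ∏ j, w (Equiv.swap u v j) ^ (c + Pi.single u 1 : ι → ℕ) j := by
  have split (g : ι → R) : ∏ j, g j = g u * g v * ∏ j ∈ {u, v}ᶜ, g j := by
    rw [← prod_mul_prod_compl {u, v}, prod_pair huv]
  have rest (i : ι) (hi : i = u ∨ i = v) :
      ∏ j ∈ {u, v}ᶜ, w j ^ (c + Pi.single i 1 : ι → ℕ) j = ∏ j ∈ {u, v}ᶜ, w j ^ c j ∧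
      ∏ j ∈ {u, v}ᶜ, w (Equiv.swap u v j) ^ (c + Pi.single i 1 : ι → ℕ) j
        = ∏ j ∈ {u, v}ᶜ, w j ^ c j := by
    constructor <;> refine prod_congr rfl fun j hj => ?_ <;>
    · obtain ⟨hju, hjv⟩ : j ≠ u ∧ j ≠ v := by simpa using hj
      have hji : j ≠ i := by rcases hi with rfl | rfl <;> assumption
      simp [Equiv.swap_apply_of_ne_of_ne hju hjv, hji]
  simp only [split]
  rw [(rest u (.inl rfl)).1, (rest u (.inl rfl)).2, (rest v (.inr rfl)).1, (rest v (.inr rfl)).2]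
  simp only [Equiv.swap_apply_left, Equiv.swap_apply_right, Pi.add_apply, Pi.single_eq_same,
    Pi.single_eq_of_ne huv, Pi.single_eq_of_ne huv.symm, add_zero]
  have hR : 0 ≤ ∏ j ∈ {u, v}ᶜ, w j ^ c j := prod_nonneg fun j _ => pow_nonneg (hw j) _
  linarith [mul_le_mul_of_nonneg_right (pow_mul_pow_add_pow_mul_pow_le_s6 (hw u) (hw v) h) hR]

noncomputable def symmetrizedMonomial (x : ι → ℝ) (c : ι → ℕ) : ℝ :=
  ∑ π : Equiv.Perm ι, ∏ j, x (π j) ^ c j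

theorem symmetrizedMonomial_eq_sum_prod_pow_comp (x : ι → ℝ) (c : ι → ℕ) :
    symmetrizedMonomial x c = ∑ π : Equiv.Perm ι, ∏ j, x j ^ c (π j) := by
  refine Fintype.sum_equiv (Equiv.inv _) _ _ fun π => ?_
  exact (Equiv.prod_comp π⁻¹ fun j => x (π j) ^ c j).symm.trans (by simp)

theorem symmetrizedMonomial_add_single_le {x : ι → ℝ} (hx : ∀ i, 0 ≤ x i) (c : ι → ℕ)
    {u v : ι} (huv : u ≠ v) (h : c v ≤ c u) :
    symmetrizedMonomial x (c + Pi.single v 1) ≤ symmetrizedMonomial x (c + Pi.single u 1) := by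
  have twice (c' : ι → ℕ) : 2 * symmetrizedMonomial x c'
      = ∑ π : Equiv.Perm ι, (∏ j, x (π j) ^ c' j + ∏ j, x ((π * Equiv.swap u v) j) ^ c' j) := by
    rw [sum_add_distrib, two_mul, symmetrizedMonomial]
    congr 1
    exact (Fintype.sum_equiv (Equiv.mulRight (Equiv.swap u v)) _ _ fun _ => rfl).symm
  have paired (π : Equiv.Perm ι) :
      ∏ j, x (π j) ^ (c + Pi.single v 1 : ι → ℕ) j
          + ∏ j, x ((π * Equiv.swap u v) j) ^ (c + Pi.single v 1 : ι → ℕ) j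
        ≤ ∏ j, x (π j) ^ (c + Pi.single u 1 : ι → ℕ) j
          + ∏ j, x ((π * Equiv.swap u v) j) ^ (c + Pi.single u 1 : ι → ℕ) j :=
    prod_pow_add_prod_swap_pow_le (w := x ∘ π) (fun i => hx (π i)) c huv h
  linarith [sum_le_sum fun π (_ : π ∈ univ) => paired π, twice (c + Pi.single v 1),
    twice (c + Pi.single u 1)]

theorem exists_step_toward_balanced {ℓ : ι → ℕ} {s : ℕ} (hℓ : ∀ i, ℓ i = s ∨ ℓ i = s + 1)
    {c : ι → ℕ} (hsum : ∑ i, c i = ∑ i, ℓ i) {n : ℕ} (hn : ∑ i, (c i - ℓ i) = n + 1) :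
    ∃ (c₀ : ι → ℕ) (u v : ι), u ≠ v ∧ c₀ v ≤ c₀ u ∧ c = c₀ + Pi.single u 1 ∧
      ∑ i, (c₀ + Pi.single v 1 : ι → ℕ) i = ∑ i, ℓ i ∧
      ∑ i, ((c₀ + Pi.single v 1 : ι → ℕ) i - ℓ i) = n := by
  obtain ⟨u, hu⟩ : ∃ u, ℓ u < c u := by
    by_contra! hle
    simp [Nat.sub_eq_zero_of_le (hle _)] at hn
  obtain ⟨v, hv⟩ : ∃ v, c v < ℓ v := by
    by_contra! hge
    have := (sum_eq_sum_iff_of_le fun i (_ : i ∈ univ) => hge i).1 hsum.symm u (mem_univ u)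
    omega
  have huv : u ≠ v := by rintro rfl; omega
  set c₀ : ι → ℕ := c - Pi.single u 1
  have hc₀u : c₀ u + 1 = c u := by simp [c₀]; omega
  have hc₀ (i) (hi : i ≠ u) : c₀ i = c i := by simp [c₀, hi]
  have hc : c = c₀ + Pi.single u 1 := by
    ext i
    by_cases hi : i = u
    · subst hi; simp [hc₀u]
    · simp [hc₀ i hi, hi]
  refine ⟨c₀, u, v, huv, ?_, hc, ?_, ?_⟩
  · -- `ℓ` is balanced, so an entry of `c` above `ℓ` is at least one below `ℓ`
    rw [hc₀ v huv.symm]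
    rcases hℓ u with h | h <;> rcases hℓ v with h' | h' <;> omega
  · rw [← hsum, hc]
    simp only [Pi.add_apply, sum_add_distrib, Fintype.sum_pi_single']
  · have hexcess (i : ι) :
        (c₀ + Pi.single v 1 : ι → ℕ) i - ℓ i + (Pi.single u 1 : ι → ℕ) i = c i - ℓ i := by
      by_cases hiu : i = u
      · subst hiu; simp [huv]; omega
      by_cases hiv : i = v
      · subst hiv; simp [hiu, hc₀ i hiu]; omega
      simp [hiu, hiv, hc₀ i hiu]
    rw [← sum_congr rfl fun i _ => hexcess i, sum_add_distrib, Fintype.sum_pi_single'] at hn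
    exact Nat.add_right_cancel hn

theorem symmetrizedMonomial_le_of_sum_eq {x : ι → ℝ} (hx : ∀ i, 0 ≤ x i) {ℓ : ι → ℕ} {s : ℕ}
    (hℓ : ∀ i, ℓ i = s ∨ ℓ i = s + 1) {c : ι → ℕ} (hsum : ∑ i, c i = ∑ i, ℓ i) :
    symmetrizedMonomial x ℓ ≤ symmetrizedMonomial x c := by
  induction hn : ∑ i, (c i - ℓ i) generalizing c with
  | zero =>
    have hle : ∀ i ∈ univ, c i ≤ ℓ i := by simpa [sum_eq_zero_iff, Nat.sub_eq_zero_iff_le] using hn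
    obtain rfl : c = ℓ := funext fun i => (sum_eq_sum_iff_of_le hle).1 hsum i (mem_univ i)
    exact le_rfl
  | succ n ih =>
    obtain ⟨c₀, u, v, huv, hvu, rfl, hsum', hn'⟩ := exists_step_toward_balanced hℓ hsum hn
    exact (ih hsum' hn').trans (symmetrizedMonomial_add_single_le hx c₀ huv hvu)

theorem sum_perm_prod_comp_eq_symmetrizedMonomial {k : ℕ} (x : ι → ℝ) (f : Fin k → ι) :
    ∑ π : Equiv.Perm ι, ∏ t, x (π (f t)) = symmetrizedMonomial x fun j => #{t | f t = j} := by
  refine sum_congr rfl fun π _ => ?_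
  rw [← prod_fiberwise' univ f fun j => x (π j)]
  simp only [prod_const]

theorem card_pow_sub_card_mul_symmetrizedMonomial_le {x : ι → ℝ} (hx : ∀ i, 0 ≤ x i)
    {ℓ : ι → ℕ} {s k : ℕ} (hℓ : ∀ i, ℓ i = s ∨ ℓ i = s + 1) (hℓk : ∑ i, ℓ i = k) (hk : k ≠ 0) :
    ((Fintype.card ι : ℝ) ^ k - Fintype.card ι) * symmetrizedMonomial x ℓ
        + (Fintype.card ι).factorial * ∑ i, x i ^ k
      ≤ (Fintype.card ι).factorial * (∑ i, x i) ^ k := by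
  set n := Fintype.card ι
  set T : (Fin k → ι) → ℝ := fun f => ∑ π : Equiv.Perm ι, ∏ t, x (π (f t))
  have htotal : ∑ f, T f = n.factorial * (∑ i, x i) ^ k := by
    have hπ (π : Equiv.Perm ι) : ∑ f : Fin k → ι, ∏ t, x (π (f t)) = (∑ i, x i) ^ k := by
      rw [← Equiv.sum_comp π x, Fintype.sum_pow]
    simp only [T]
    rw [sum_comm, sum_congr rfl fun π _ => hπ π, sum_const, card_univ, Fintype.card_perm,
      nsmul_eq_mul]
  have : NeZero k := ⟨hk⟩
  let const : ι ↪ (Fin k → ι) := ⟨Function.const (Fin k), Function.const_injective⟩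
  have hconst : ∑ f ∈ univ.map const, T f = n.factorial * ∑ i, x i ^ k := by
    simp only [sum_map, T, const, Function.Embedding.coeFn_mk, Function.const_apply, prod_const,
      card_univ, Fintype.card_fin]
    rw [sum_comm, sum_congr rfl fun π _ => Equiv.sum_comp π (x · ^ k), sum_const, card_univ,
      Fintype.card_perm, nsmul_eq_mul]
  have hcard : (#(univ.map const)ᶜ : ℝ) = (n : ℝ) ^ k - n := by
    rw [card_compl, card_map, card_univ, Fintype.card_fun, Fintype.card_fin,
      Nat.cast_sub (Nat.le_self_pow hk n)]
    push_cast
    rfl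
  have hnonconst : ((n : ℝ) ^ k - n) * symmetrizedMonomial x ℓ ≤ ∑ f ∈ (univ.map const)ᶜ, T f := by
    rw [← hcard, ← nsmul_eq_mul]
    refine card_nsmul_le_sum _ _ _ fun f _ => ?_
    simp only [T]
    rw [sum_perm_prod_comp_eq_symmetrizedMonomial]
    refine symmetrizedMonomial_le_of_sum_eq hx hℓ ?_
    rw [← card_eq_sum_card_fiberwise fun t _ => mem_univ (f t), card_univ, Fintype.card_fin, hℓk]
  rw [← htotal, ← sum_add_sum_compl (univ.map const), hconst]
  linarith

theorem stmt_6_general (d k s : ℕ) (hd : 2 ≤ d) (hk : 2 ≤ k) (ℓ : Fin d → ℕ) (hℓsum : ∑ i, ℓ i = k)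
    (hℓ : ∀ i, ℓ i = s ∨ ℓ i = s + 1)
    (x : Fin d → ℝ) (hx : ∀ i, 0 ≤ x i) (hxsum : ∑ i, x i = 1)
    (hxk : ∑ i, x i ^ k < 1) :
    (1 / (1 - ∑ i, x i ^ k)) * (1 / (Nat.factorial d : ℝ))
        * ∑ π : Equiv.Perm (Fin d), ∏ j, x j ^ ℓ (π j)
      ≤ 1 / ((d : ℝ) ^ k - d)
    ∧ (1 / (1 - ∑ _i : Fin d, (1 / (d : ℝ)) ^ k)) * (1 / (Nat.factorial d : ℝ))
        * ∑ π : Equiv.Perm (Fin d), ∏ _j : Fin d, (1 / (d : ℝ)) ^ ℓ (π _j)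
      = 1 / ((d : ℝ) ^ k - d) := by
  have hdk : (d : ℝ) < (d : ℝ) ^ k := lt_self_pow₀ (by exact_mod_cast hd) hk
  have hfac : (0 : ℝ) < d.factorial := by positivity
  refine ⟨?_, ?_⟩
  · have key := card_pow_sub_card_mul_symmetrizedMonomial_le hx hℓ hℓsum (by omega)
    rw [Fintype.card_fin, hxsum, one_pow] at key
    rw [← symmetrizedMonomial_eq_sum_prod_pow_comp, div_mul_div_comm, one_mul, one_div_mul_eq_div,
      div_le_div_iff₀ (mul_pos (by linarith) hfac) (by linarith)]
    linarith
  · have hprod (π : Equiv.Perm (Fin d)) : ∏ j, (1 / (d : ℝ)) ^ ℓ (π j) = (1 / (d : ℝ)) ^ k := by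
      rw [prod_pow_eq_pow_sum, Equiv.sum_comp, hℓsum]
    rw [sum_congr rfl fun π _ => hprod π]
    simp only [sum_const, card_univ, Fintype.card_fin, Fintype.card_perm, nsmul_eq_mul, one_div_pow]
    field_simp

theorem stmt_6 (d k s b : ℕ) (hd : 2 ≤ d) (hk : 2 ≤ k) (hb : b ≤ d - 1)
    (hks : k = d * s + b) (ℓ : Fin d → ℕ) (hℓsum : ∑ i, ℓ i = k)
    (hℓ : ∀ i, ℓ i = s ∨ ℓ i = s + 1)
    (x : Fin d → ℝ) (hx : ∀ i, 0 ≤ x i) (hxsum : ∑ i, x i = 1)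
    (hxk : ∑ i, x i ^ k < 1) :
    (1 / (1 - ∑ i, x i ^ k)) * (1 / (Nat.factorial d : ℝ))
        * ∑ π : Equiv.Perm (Fin d), ∏ j, x j ^ ℓ (π j)
      ≤ 1 / ((d : ℝ) ^ k - d)
    ∧ (1 / (1 - ∑ _i : Fin d, (1 / (d : ℝ)) ^ k)) * (1 / (Nat.factorial d : ℝ))
        * ∑ π : Equiv.Perm (Fin d), ∏ _j : Fin d, (1 / (d : ℝ)) ^ ℓ (π _j)
      = 1 / ((d : ℝ) ^ k - d) :=
  stmt_6_general d k s hd hk ℓ hℓsum hℓ x hx hxsum hxk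
end
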